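/- arXiv:0807.1704 — 5 statements merged into one kernel-verified Lean document; each statement's English description precedes it below -/
import Mathlib

section
/- For any concrete site D, the presheaf Ω defined by Ω(D) = the set of all functions hom(1,D) → {0,1}, with Ω(f) given by precomposition with the underlying function of f, is a concrete sheaf on D. -/
/-!
Plots of `Ω` are arbitrary functions on points, so they are determined by their values at points
(concreteness), and a compatible family over a cover is glued pointwise: every point of `D` factors
through some arrow of the cover, by joint surjectivity.
-/

open CategoryTheory CategoryTheory.Limits Opposite

universe u

/-- A concrete site: a subcanonical site with a terminal object such that `hom(1,-)` is
faithful and covering families are jointly surjective on points. -/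
structure ConcreteSite : Type (u + 1) where
  C : Type u
  [cat : Category.{u} C]
  J : Coverage C
  term : C
  isTerminal : IsTerminal term
  subcanonical : ∀ X : C, Presieve.IsSheaf J.toGrothendieck (yoneda.obj X)
  pointsFaithful : ∀ {A B : C} (f g : A ⟶ B), (∀ p : term ⟶ A, p ≫ f = p ≫ g) → f = g
  jointlySurjective : ∀ {X : C} {R : Presieve X}, R ∈ J.coverings X →
    ∀ p : term ⟶ X, ∃ (Y : C) (f : Y ⟶ X) (q : term ⟶ Y), R f ∧ q ≫ f = p

attribute [instance] ConcreteSite.cat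

variable (S : ConcreteSite.{u})

/-- The underlying function of a plot. -/
def uFn (X : S.Cᵒᵖ ⥤ Type u) {D : S.C} (φ : X.obj (op D)) :
    (S.term ⟶ D) → X.obj (op S.term) :=
  fun d => X.map d.op φ

/-- A presheaf is concrete if plots are determined by their underlying functions. -/
def IsConcrete (X : S.Cᵒᵖ ⥤ Type u) : Prop :=
  ∀ D : S.C, Function.Injective (fun φ : X.obj (op D) => uFn S X φ)

def IsConcSheaf (X : S.Cᵒᵖ ⥤ Type u) : Prop :=
  Presieve.IsSheaf S.J.toGrothendieck X ∧ IsConcrete S X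

/-- The category of concrete sheaves on a concrete site, a full subcategory of presheaves. -/
abbrev ConcSheaf := ObjectProperty.FullSubcategory (IsConcSheaf S)

/-- The forgetful functor to presheaves. -/
abbrev toPre : ConcSheaf S ⥤ (S.Cᵒᵖ ⥤ Type u) := ObjectProperty.ι _

/-- The underlying-set functor, sending a concrete sheaf `X` to `X(1)`. -/
abbrev uSet : ConcSheaf S ⥤ Type u := toPre S ⋙ (evaluation _ _).obj (op S.term)

/-- The presheaf Ω whose plots at D are arbitrary functions from the points of D to {0,1}. -/
def Omega (S : ConcreteSite.{u}) : S.Cᵒᵖ ⥤ Type u where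
  obj D := (S.term ⟶ D.unop) → ULift.{u} Bool
  map f := TypeCat.ofHom (fun φ => fun d => φ (d ≫ f.unop))

namespace Omega

variable {S}

@[simp]
lemma map_apply {D E : S.C} (f : E ⟶ D) (φ : (Omega S).obj (op D)) (d : S.term ⟶ E) :
    (Omega S).map f.op φ d = φ (d ≫ f) :=
  rfl

@[simp]
lemma uFn_apply_id {D : S.C} (φ : (Omega S).obj (op D)) (p : S.term ⟶ D) :
    uFn S (Omega S) φ p (𝟙 S.term) = φ p := by
  simp [uFn]

variable (S) in
theorem isConcrete : IsConcrete S (Omega S) := fun _ φ ψ h =>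
  funext fun p => by simpa only [uFn_apply_id] using congrFun (congrFun h p) (𝟙 S.term)

/-- The glued plot at a point `p = q ≫ f` is the value at `q` of the member indexed by `f`;
compatibility, tested at the points `q` and `d` of a square `q ≫ f = d ≫ g`, shows it does not
depend on the chosen factorization. -/
theorem isSheafFor_of_jointlySurjective {D : S.C} {R : Presieve D}
    (hR : ∀ p : S.term ⟶ D, ∃ (Y : S.C) (f : Y ⟶ D) (q : S.term ⟶ Y), R f ∧ q ≫ f = p) :
    Presieve.IsSheafFor (Omega S) R := by
  intro x hx
  choose Y f q hRf hq using hR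
  refine ⟨fun p => x (f p) (hRf p) (q p), fun Z g hg => funext fun d => ?_, fun φ hφ => ?_⟩
  · have hsq : q (d ≫ g) ≫ f (d ≫ g) = d ≫ g := hq _
    have h := congrFun (hx (q (d ≫ g)) d (hRf _) hg hsq) (𝟙 S.term)
    simp only [map_apply, Category.id_comp] at h
    exact h
  · funext p
    simpa [hq] using congrFun (hφ (f p) (hRf p)) (q p)

variable (S) in
theorem isSheaf : Presieve.IsSheaf S.J.toGrothendieck (Omega S) :=
  (Presieve.isSheaf_coverage _ _).2 fun _ hR =>
    isSheafFor_of_jointlySurjective (S.jointlySurjective hR)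

end Omega

/-- Ω is a concrete sheaf on any concrete site. -/
theorem statement6 (S : ConcreteSite.{u}) : IsConcSheaf S (Omega S) :=
  ⟨Omega.isSheaf S, Omega.isConcrete S⟩
end

section
/- For any concrete site D, a morphism f : X → Y of concrete sheaves on D is a monomorphism if and only if its underlying function f₁ : X(1) → Y(1) is injective. -/
open CategoryTheory CategoryTheory.Limits Opposite

universe u

variable (S : ConcreteSite.{u})

/-!
Since `hom(1, -)` is faithful, the representable `yoneda 1` is a concrete sheaf, and by Yoneda
the points `X(1)` are exactly the maps `yoneda 1 ⟶ X`; so `X ↦ X(1)` is corepresentable and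
sends monomorphisms to injections. Conversely, a map into a concrete presheaf is determined by
its component at `1`, because each plot is determined by its values at the points `1 ⟶ D`.
-/

lemma CategoryTheory.Functor.CorepresentableBy.map_injective_of_mono {C : Type*} [Category C]
    {F : C ⥤ Type*} {X : C} (e : F.CorepresentableBy X) {Y Y' : C} (f : Y ⟶ Y') [Mono f] :
    Function.Injective (F.map f) := by
  intro a b hab
  apply e.homEquiv.symm.injective
  rw [← cancel_mono f, e.homEquiv_symm_comp, e.homEquiv_symm_comp, hab]

namespace ConcreteSite

def termConcSheaf : ConcSheaf S :=
  ⟨yoneda.obj S.term, S.subcanonical S.term, fun _ φ ψ _ =>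
    S.pointsFaithful φ ψ (fun _ => S.isTerminal.hom_ext _ _)⟩

def uSetCorepresentableBy : (uSet S).CorepresentableBy (termConcSheaf S) where
  homEquiv := (ObjectProperty.fullyFaithfulι _).homEquiv.trans yonedaEquiv
  homEquiv_comp g f := yonedaEquiv_comp f.hom g.hom

variable {S}

lemma natTrans_ext_of_isConcrete {Z X : S.Cᵒᵖ ⥤ Type u} (hX : IsConcrete S X) {g h : Z ⟶ X}
    (hterm : g.app (op S.term) = h.app (op S.term)) : g = h := by
  ext D φ
  apply hX D.unop
  funext d
  change X.map d.op (g.app D φ) = X.map d.op (h.app D φ)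
  rw [← NatTrans.naturality_apply, ← NatTrans.naturality_apply, hterm]

lemma mono_of_injective_uSet_map {X Y : ConcSheaf S} (f : X ⟶ Y)
    (hf : Function.Injective ((uSet S).map f)) : Mono f where
  right_cancellation g h hgh := by
    refine ObjectProperty.hom_ext _ (natTrans_ext_of_isConcrete X.2.2 ?_)
    ext z
    exact hf (congrArg (fun k : _ ⟶ Y => k.hom.app (op S.term) z) hgh)

end ConcreteSite

/-- a morphism of concrete sheaves is a monomorphism iff its underlying
function is injective. -/
theorem statement7 (S : ConcreteSite.{u}) {X Y : ConcSheaf S} (f : X ⟶ Y) :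
    Mono f ↔ Function.Injective ((uSet S).map f) :=
  ⟨fun _ => S.uSetCorepresentableBy.map_injective_of_mono f,
    ConcreteSite.mono_of_injective_uSet_map f⟩
end

section
/- For any concrete site D, a morphism f : X → Y of concrete sheaves on D is an epimorphism if and only if its underlying function f₁ : X(1) → Y(1) is surjective. -/
open CategoryTheory CategoryTheory.Limits Opposite

universe u

variable (S : ConcreteSite.{u})

/-! The sheaf `Ω` of sets of points, `Ω(D) = Set (1 ⟶ D)`, classifies subsets of points: every
`A ⊆ Y(1)` gives a characteristic map `Y ⟶ Ω`, from which `A` can be read off, and precomposing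
with `f : X ⟶ Y` takes preimages under `f₁`. If `f` is epic, `f₁⁻¹'` is therefore injective,
i.e. `f₁` is surjective. Conversely, morphisms of concrete sheaves are determined by their action
on points, so `uSet` is faithful and reflects epimorphisms. -/

namespace ConcreteSite

abbrev omega : S.Cᵒᵖ ⥤ Type u where
  obj D := Set (S.term ⟶ unop D)
  map f := TypeCat.ofHom fun A => (· ≫ f.unop) ⁻¹' A

variable {S} in
lemma mem_iff_of_isCompatible {X : S.C} {R : Presieve X}
    {x : Presieve.FamilyOfElements (omega S) R} (hx : x.Compatible)
    {Z Z' : S.C} {g : Z ⟶ X} {g' : Z' ⟶ X} (hg : R g) (hg' : R g')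
    {q : S.term ⟶ Z} {q' : S.term ⟶ Z'} (h : q ≫ g = q' ≫ g') :
    q ∈ x g hg ↔ q' ∈ x g' hg' := by
  simpa using congrArg (𝟙 S.term ∈ ·) (hx q q' hg hg' h)

variable {S} in
lemma omega_isSeparatedFor {X : S.C} {R : Presieve X} (hR : R ∈ S.J.coverings X) :
    Presieve.IsSeparatedFor (omega S) R := by
  intro x t₁ t₂ h₁ h₂
  ext p
  obtain ⟨Z, g, q, hg, rfl⟩ := S.jointlySurjective hR p
  exact Set.ext_iff.1 ((h₁ g hg).trans (h₂ g hg).symm) q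

variable {S} in
lemma omega_exists_isAmalgamation {X : S.C} {R : Presieve X}
    {x : Presieve.FamilyOfElements (omega S) R} (hx : x.Compatible) :
    ∃ t, x.IsAmalgamation t := by
  refine ⟨{p | ∃ (Z : S.C) (g : Z ⟶ X) (hg : R g) (q : S.term ⟶ Z), q ≫ g = p ∧ q ∈ x g hg},
    fun Z g hg => ?_⟩
  ext q
  exact ⟨fun ⟨_, _, hg', _, h, hq'⟩ => (mem_iff_of_isCompatible hx hg' hg h).1 hq',
    fun hq => ⟨Z, g, hg, q, rfl, hq⟩⟩

lemma omega_isSheaf : Presieve.IsSheaf S.J.toGrothendieck (omega S) :=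
  (Presieve.isSheaf_coverage _ _).2 fun _ hR =>
    (omega_isSeparatedFor hR).isSheafFor fun _ => omega_exists_isAmalgamation

lemma omega_isConcrete : IsConcrete S (omega S) := fun D A B h => by
  ext p
  simpa [uFn] using congrArg (𝟙 S.term ∈ ·) (congrFun h p)

def omegaSheaf : ConcSheaf S := ⟨omega S, omega_isSheaf S, omega_isConcrete S⟩

def charMap (Y : S.Cᵒᵖ ⥤ Type u) (A : Set (Y.obj (op S.term))) : Y ⟶ omega S where
  app D := TypeCat.ofHom fun φ => uFn S Y φ ⁻¹' A
  naturality D D' e := by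
    ext φ p
    simp [uFn]

variable {S} in
lemma comp_charMap {X Y : S.Cᵒᵖ ⥤ Type u} (α : X ⟶ Y) (A : Set (Y.obj (op S.term))) :
    α ≫ charMap S Y A = charMap S X (α.app (op S.term) ⁻¹' A) := by
  ext D φ p
  simp [charMap, uFn]

lemma charMap_injective (Y : S.Cᵒᵖ ⥤ Type u) : Function.Injective (charMap S Y) := by
  intro A B h
  ext y
  simpa [charMap, uFn] using
    Set.ext_iff.1 (ConcreteCategory.congr_hom (congr_app h (op S.term)) y) (𝟙 S.term)

instance : (uSet S).Faithful where
  map_injective {Y Z g h} hgh := by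
    ext D φ
    apply Z.property.2 (unop D)
    funext d
    exact (NatTrans.naturality_apply g.hom d.op φ).symm.trans <|
      (ConcreteCategory.congr_hom hgh _).trans (NatTrans.naturality_apply h.hom d.op φ)

end ConcreteSite

/-- a morphism of concrete sheaves is an epimorphism iff its underlying
function is surjective. -/
theorem statement8 (S : ConcreteSite.{u}) {X Y : ConcSheaf S} (f : X ⟶ Y) :
    Epi f ↔ Function.Surjective ((uSet S).map f) := by
  refine ⟨fun _ => ?_, fun hf => (uSet S).epi_of_epi_map ((epi_iff_surjective _).2 hf)⟩
  rw [← Set.preimage_injective]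
  intro A B hAB
  have : f ≫ (ObjectProperty.homMk (S.charMap Y.obj A) : Y ⟶ S.omegaSheaf) =
      f ≫ ObjectProperty.homMk (S.charMap Y.obj B) :=
    ObjectProperty.hom_ext _ <| (ConcreteSite.comp_charMap f.hom A).trans <|
      (congrArg (S.charMap X.obj) hAB).trans (ConcreteSite.comp_charMap f.hom B).symm
  exact S.charMap_injective Y.obj (congrArg (·.hom) ((cancel_epi f).1 this))
end

section
/- For any concrete site D, a morphism i : A → X of concrete sheaves is a strong monomorphism if and only if it exhibits A as a subspace of X, meaning: for every plot φ ∈ X(D) whose underlying function has image contained in the image of the underlying function of i, there exists a unique plot ψ ∈ A(D) with i_D(ψ) = φ. -/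
open CategoryTheory CategoryTheory.Limits Opposite

universe u

variable (S : ConcreteSite.{u})

/-- `i : A ⟶ X` exhibits `A` as a subspace of `X`: every plot of `X` whose underlying
function takes values in the image of `i` lifts uniquely to a plot of `A`. -/
def IsSubspace (S : ConcreteSite.{u}) {A X : ConcSheaf S} (i : A ⟶ X) : Prop :=
  ∀ (D : S.C) (φ : X.obj.obj (op D)),
    Set.range (uFn S X.obj φ) ⊆ Set.range ((uSet S).map i) →
      ∃! ψ : A.obj.obj (op D), ((toPre S).map i).app (op D) ψ = φ

/-!
Maps out of a concrete sheaf are determined by their values on points, so a map that is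
surjective on points is an epimorphism. Conversely every epimorphism is surjective on points:
maps `B ⟶ codiscrete T` into the codiscrete sheaf `c ↦ ((1 ⟶ c) → T)` are just functions
`B(1) → T`, so the points functor is a left adjoint and preserves epimorphisms.

Every `i : A ⟶ X` factors as `A ⟶ X_σ ⟶ X`, where `X_σ` is the subsheaf of plots of `X` whose
points lie in the image `σ` of `i`. The first map is surjective on points, hence epi, and the
inclusion `X_σ ⟶ X` is a strong mono, because a square against an epimorphism `p` has its
bottom map landing in `X_σ` as `p` is surjective on points. Being a subspace says precisely that
`A ⟶ X_σ` is an isomorphism. So if `i` is a strong mono, `A ⟶ X_σ` is an epic strong mono, hence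
an isomorphism; conversely an isomorphism followed by a strong mono is a strong mono.
-/

namespace ConcSheaf

variable {S : ConcreteSite.{u}}

lemma uFn_map {X : S.Cᵒᵖ ⥤ Type u} {c c' : S.Cᵒᵖ} (u : c ⟶ c') (φ : X.obj c) :
    uFn S X (X.map u φ) = uFn S X φ ∘ (· ≫ u.unop) := by
  funext d
  change X.map d.op (X.map u φ) = X.map (d ≫ u.unop).op φ
  rw [op_comp, Quiver.Hom.op_unop, Functor.map_comp_apply]

lemma uFn_app {X Y : S.Cᵒᵖ ⥤ Type u} (f : X ⟶ Y) {c : S.Cᵒᵖ} (φ : X.obj c) :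
    uFn S Y (f.app c φ) = f.app (op S.term) ∘ uFn S X φ :=
  funext fun d => (NatTrans.naturality_apply f d.op φ).symm

lemma uFn_id {X : S.Cᵒᵖ ⥤ Type u} (φ : X.obj (op S.term)) : uFn S X φ (𝟙 S.term) = φ := by
  simp [uFn]

lemma hom_ext_of_points {B C : ConcSheaf S} {f g : B ⟶ C}
    (h : ∀ β : B.obj.obj (op S.term), f.hom.app _ β = g.hom.app _ β) : f = g := by
  apply ObjectProperty.hom_ext
  ext c β
  refine C.2.2 c.unop (funext fun d => ?_)
  change C.obj.map d.op (f.hom.app c β) = C.obj.map d.op (g.hom.app c β)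
  rw [← NatTrans.naturality_apply, ← NatTrans.naturality_apply, h]

lemma epi_of_surjective_points {B C : ConcSheaf S} (p : B ⟶ C)
    (hp : Function.Surjective (p.hom.app (op S.term))) : Epi p where
  left_cancellation f g hfg := hom_ext_of_points fun γ => by
    obtain ⟨β, rfl⟩ := hp γ
    exact congr(($hfg).hom.app (op S.term) β)

variable (S) in
def codiscretePresheaf (T : Type u) : S.Cᵒᵖ ⥤ Type u where
  obj c := (S.term ⟶ c.unop) → T
  map u := TypeCat.ofHom fun f d => f (d ≫ u.unop)

lemma isConcSheaf_codiscretePresheaf (T : Type u) : IsConcSheaf S (codiscretePresheaf S T) := by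
  refine ⟨(Presieve.isSheaf_coverage _ _).2 fun {D} R hR x hx => ?_, fun D f g h => ?_⟩
  · have agree : ∀ {Y Y' : S.C} (f : Y ⟶ D) (f' : Y' ⟶ D) (hf : R f) (hf' : R f')
        (q : S.term ⟶ Y) (q' : S.term ⟶ Y'), q ≫ f = q' ≫ f' → x f hf q = x f' hf' q' :=
      fun f f' hf hf' q q' h => by
        have := congrFun (hx q q' hf hf' h) (𝟙 S.term)
        change x f hf (𝟙 _ ≫ q) = x f' hf' (𝟙 _ ≫ q') at this
        simpa using this
    -- every point of `D` lifts along some arrow of the cover, and `agree` makes the choice harmless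
    choose Y F Q hF hQ using fun d => S.jointlySurjective hR d
    refine ⟨fun d => x (F d) (hF d) (Q d),
      fun Z f hf => funext fun q => agree _ _ _ _ _ _ (hQ (q ≫ f)), fun t ht => funext fun d => ?_⟩
    calc t d = t (Q d ≫ F d) := by rw [hQ d]
      _ = x (F d) (hF d) (Q d) := congrFun (ht (F d) (hF d)) (Q d)
  · funext d
    have := congrFun (congrFun h d) (𝟙 S.term)
    change f (𝟙 _ ≫ d) = g (𝟙 _ ≫ d) at this
    simpa using this

variable (S) in
def codiscrete (T : Type u) : ConcSheaf S :=
  ⟨codiscretePresheaf S T, isConcSheaf_codiscretePresheaf T⟩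

def toCodiscrete {B : ConcSheaf S} {T : Type u} (g : B.obj.obj (op S.term) → T) :
    B ⟶ codiscrete S T :=
  ObjectProperty.homMk
    { app c := TypeCat.ofHom fun β d => g (uFn S B.obj β d)
      naturality c c' u := by
        ext β
        funext d
        change g (B.obj.map d.op (B.obj.map u β)) = g (B.obj.map (d ≫ u.unop).op β)
        rw [op_comp, Quiver.Hom.op_unop, Functor.map_comp_apply] }

lemma comp_toCodiscrete {E B : ConcSheaf S} {T : Type u} (p : E ⟶ B)
    (g : B.obj.obj (op S.term) → T) :
    p ≫ toCodiscrete g = toCodiscrete (g ∘ p.hom.app (op S.term)) := by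
  apply ObjectProperty.hom_ext
  ext c ε
  funext d
  change g (B.obj.map d.op (p.hom.app c ε)) = g (p.hom.app _ (E.obj.map d.op ε))
  rw [NatTrans.naturality_apply]

lemma toCodiscrete_injective {B : ConcSheaf S} {T : Type u} :
    Function.Injective (toCodiscrete (B := B) (T := T)) := fun g₁ g₂ h => funext fun β => by
  have := congrFun (ConcreteCategory.congr_hom congr(($h).hom.app (op S.term)) β) (𝟙 _)
  change g₁ (B.obj.map (𝟙 _) β) = g₂ (B.obj.map (𝟙 _) β) at this
  simpa using this

instance : (uSet S).PreservesEpimorphisms where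
  preserves {E B} p _ := ⟨fun {T} g₁ g₂ h => by
    have hp : g₁ ∘ p.hom.app (op S.term) = g₂ ∘ p.hom.app (op S.term) :=
      funext (ConcreteCategory.congr_hom h)
    have hg : toCodiscrete (B := B) g₁ = toCodiscrete g₂ :=
      (cancel_epi p).1 (by rw [comp_toCodiscrete, comp_toCodiscrete, hp])
    exact ConcreteCategory.hom_ext _ _ (congrFun (toCodiscrete_injective hg))⟩

lemma surjective_points_of_epi {E B : ConcSheaf S} (p : E ⟶ B) [Epi p] :
    Function.Surjective (p.hom.app (op S.term)) :=
  (epi_iff_surjective _).1 ((uSet S).map_epi p)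

lemma isIso_iff_bijective_app {B C : ConcSheaf S} (f : B ⟶ C) :
    IsIso f ↔ ∀ D : S.C, Function.Bijective (f.hom.app (op D)) := by
  rw [← isIso_iff_of_reflects_iso f (toPre S), NatTrans.isIso_iff_isIso_app]
  simp only [isIso_iff_bijective]
  exact ⟨fun h D => h (op D), fun h c => h c.unop⟩

def subspacePresheaf (X : ConcSheaf S) (σ : Set (X.obj.obj (op S.term))) :
    S.Cᵒᵖ ⥤ Type u where
  obj c := {φ : X.obj.obj c // Set.range (uFn S X.obj φ) ⊆ σ}
  map u := TypeCat.ofHom fun φ =>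
    ⟨X.obj.map u φ.1, by rw [uFn_map]; exact (Set.range_comp_subset_range _ _).trans φ.2⟩

lemma isConcSheaf_subspacePresheaf (X : ConcSheaf S) (σ : Set (X.obj.obj (op S.term))) :
    IsConcSheaf S (subspacePresheaf X σ) := by
  refine ⟨(Presieve.isSheaf_coverage _ _).2 fun {D} R hR x hx => ?_, fun D φ₁ φ₂ h => ?_⟩
  · obtain ⟨t, ht, hunique⟩ := (Presieve.isSheaf_coverage _ _).1 X.2.1 R hR
      (fun Y f hf => (x f hf).1) fun _ _ _ _ _ _ _ h₁ h₂ hc => congrArg Subtype.val (hx _ _ h₁ h₂ hc)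
    have hσ : Set.range (uFn S X.obj t) ⊆ σ := by
      rintro _ ⟨d, rfl⟩
      obtain ⟨Y, f, q, hf, rfl⟩ := S.jointlySurjective hR d
      have hq : uFn S X.obj t (q ≫ f) = uFn S X.obj (x f hf).1 q := by
        rw [← show X.obj.map f.op t = (x f hf).1 from ht f hf, uFn_map]
        rfl
      exact hq ▸ (x f hf).2 ⟨q, rfl⟩
    exact ⟨⟨t, hσ⟩, fun Y f hf => Subtype.ext (ht f hf),
      fun t' ht' => Subtype.ext (hunique t'.1 fun Y f hf => congrArg Subtype.val (ht' f hf))⟩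
  · exact Subtype.ext (X.2.2 D (funext fun d => congrArg Subtype.val (congrFun h d)))

def subspace (X : ConcSheaf S) (σ : Set (X.obj.obj (op S.term))) : ConcSheaf S :=
  ⟨subspacePresheaf X σ, isConcSheaf_subspacePresheaf X σ⟩

namespace subspace

variable {X : ConcSheaf S} {σ : Set (X.obj.obj (op S.term))}

variable (X σ) in
def ι : subspace X σ ⟶ X :=
  ObjectProperty.homMk { app c := TypeCat.ofHom Subtype.val }

def lift {B : ConcSheaf S} (g : B ⟶ X) (hg : ∀ β, g.hom.app (op S.term) β ∈ σ) :
    B ⟶ subspace X σ :=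
  ObjectProperty.homMk
    { app c := TypeCat.ofHom fun β => ⟨g.hom.app c β, by rw [uFn_app]; rintro _ ⟨d, rfl⟩; exact hg _⟩
      naturality c c' u := by ext β; exact Subtype.ext (NatTrans.naturality_apply g.hom u β :) }

lemma lift_ι {B : ConcSheaf S} (g : B ⟶ X) (hg : ∀ β, g.hom.app (op S.term) β ∈ σ) :
    lift g hg ≫ ι X σ = g :=
  rfl

instance : Mono (ι X σ) where
  right_cancellation f g h := by
    apply ObjectProperty.hom_ext
    ext c β
    exact Subtype.ext (ConcreteCategory.congr_hom congr(($h).hom.app c) β :)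

lemma strongMono_ι : StrongMono (ι X σ) := by
  refine StrongMono.mk' fun E B p hp f g sq => ?_
  have hg : ∀ β, g.hom.app (op S.term) β ∈ σ := by
    intro β
    obtain ⟨e, rfl⟩ := surjective_points_of_epi p β
    have hfe := (f.hom.app _ e).2 ⟨𝟙 _, rfl⟩
    rw [uFn_id] at hfe
    exact (ConcreteCategory.congr_hom congr(($sq.w).hom.app (op S.term)) e) ▸ hfe
  refine ⟨⟨lift g hg, ?_, lift_ι g hg⟩⟩
  exact (cancel_mono (ι X σ)).1 (by rw [Category.assoc, lift_ι, sq.w])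

end subspace

def imageCorestriction {A X : ConcSheaf S} (i : A ⟶ X) :
    A ⟶ subspace X (Set.range ((uSet S).map i)) :=
  subspace.lift i fun a => ⟨a, rfl⟩

lemma imageCorestriction_ι {A X : ConcSheaf S} (i : A ⟶ X) :
    imageCorestriction i ≫ subspace.ι X _ = i :=
  rfl

instance {A X : ConcSheaf S} (i : A ⟶ X) : Epi (imageCorestriction i) :=
  epi_of_surjective_points _ fun φ => by
    obtain ⟨a, ha⟩ := φ.2 ⟨𝟙 _, rfl⟩
    exact ⟨a, Subtype.ext (ha.trans (uFn_id _))⟩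

lemma isSubspace_iff_isIso_imageCorestriction {A X : ConcSheaf S} (i : A ⟶ X) :
    IsSubspace S i ↔ IsIso (imageCorestriction i) := by
  simp only [isIso_iff_bijective_app, Function.bijective_iff_existsUnique]
  refine forall_congr' fun D => ⟨fun h φ => ?_, fun h φ hφ => ?_⟩
  · exact (existsUnique_congr fun ψ => Subtype.ext_iff).2 (h φ.1 φ.2)
  · exact (existsUnique_congr fun ψ => Subtype.ext_iff).1 (h ⟨φ, hφ⟩)

end ConcSheaf

/-- a morphism of concrete sheaves is a strong monomorphism iff it exhibits
its source as a subspace of its target. -/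
theorem statement9 (S : ConcreteSite.{u}) {A X : ConcSheaf S} (i : A ⟶ X) :
    StrongMono i ↔ IsSubspace S i := by
  rw [ConcSheaf.isSubspace_iff_isIso_imageCorestriction]
  have hfac := ConcSheaf.imageCorestriction_ι i
  have hι := ConcSheaf.subspace.strongMono_ι (X := X) (σ := Set.range ((uSet S).map i))
  constructor
  · intro hi
    rw [← hfac] at hi
    have := strongMono_of_strongMono (ConcSheaf.imageCorestriction i) (ConcSheaf.subspace.ι X _)
    exact isIso_of_epi_of_strongMono _
  · intro
    rw [← hfac]
    exact strongMono_comp _ _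
end

section
/- On a concrete site, applying Grothendieck's plus construction once to a concrete presheaf yields a concrete sheaf; hence the sheafification of a concrete presheaf is concrete. -/
open CategoryTheory CategoryTheory.Limits Opposite

universe u

variable (S : ConcreteSite.{u})

/-- The category of concrete presheaves on a concrete site. -/
abbrev ConcPre (S : ConcreteSite.{u}) := ObjectProperty.FullSubcategory (IsConcrete S)

/-!
Covering sieves of a concrete site are jointly surjective on points, so a concrete presheaf `X`
is separated; hence `X⁺` is a sheaf and `toPlus` is injective. Two elements of `X⁺(D)` with the
same underlying function have representatives on a common cover; along each arrow of the cover
they restrict to `toPlus` of plots of `X`, which agree because `X` is concrete and `toPlus` is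
injective at the terminal object. Since `X⁺` is always separated, the two elements agree.
-/

namespace ConcreteSite

lemma exists_lift_of_mem_toGrothendieck {X : S.C} {R : Sieve X}
    (hR : R ∈ S.J.toGrothendieck X) (p : S.term ⟶ X) :
    ∃ (Y : S.C) (f : Y ⟶ X) (q : S.term ⟶ Y), R f ∧ q ≫ f = p := by
  induction hR with
  | of X R hR =>
    obtain ⟨Y, f, q, hf, hq⟩ := S.jointlySurjective hR p
    exact ⟨Y, f, q, Sieve.le_generate R Y f hf, hq⟩
  | top X => exact ⟨X, 𝟙 X, p, trivial, Category.comp_id p⟩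
  | transitive X R T _ _ ih ihT =>
    obtain ⟨Y, f, q, hf, rfl⟩ := ih p
    obtain ⟨Z, g, r, hg, rfl⟩ := ihT hf q
    exact ⟨Z, g ≫ f, r, hg, (Category.assoc r g f).symm⟩

end ConcreteSite

lemma uFn_map (X : S.Cᵒᵖ ⥤ Type u) {D E : S.C} (f : E ⟶ D) (φ : X.obj (op D)) :
    uFn S X (X.map f.op φ) = fun d => uFn S X φ (d ≫ f) := by
  funext d
  simp [uFn]

lemma uFn_app {X Y : S.Cᵒᵖ ⥤ Type u} (η : X ⟶ Y) {D : S.C} (φ : X.obj (op D)) :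
    uFn S Y (η.app (op D) φ) = η.app (op S.term) ∘ uFn S X φ := by
  funext d
  exact (NatTrans.naturality_apply η d.op φ).symm

open GrothendieckTopology GrothendieckTopology.Plus

namespace IsConcrete

variable {S} {X : S.Cᵒᵖ ⥤ Type u}

lemma eq_of_cover (hX : IsConcrete S X) (D : S.C) (T : S.J.toGrothendieck.Cover D)
    (φ ψ : X.obj (op D)) (h : ∀ I : T.Arrow, X.map I.f.op φ = X.map I.f.op ψ) : φ = ψ := by
  refine hX D (funext fun p => ?_)
  obtain ⟨Y, f, q, hf, rfl⟩ := S.exists_lift_of_mem_toGrothendieck T.condition p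
  have hI := congrFun (congrArg (uFn S X) (h ⟨Y, f, hf⟩)) q
  simpa only [uFn_map] using hI

lemma injective_uFn_toPlus (hX : IsConcrete S X) (D : S.C) :
    Function.Injective fun φ : X.obj (op D) =>
      uFn S (S.J.toGrothendieck.plusObj X) ((S.J.toGrothendieck.toPlus X).app (op D) φ) := by
  simp only [uFn_app]
  exact (inj_of_sep X hX.eq_of_cover S.term).comp_left.comp (hX D)

lemma plusObj (hX : IsConcrete S X) : IsConcrete S (S.J.toGrothendieck.plusObj X) := by
  intro D x y hxy
  obtain ⟨Tx, s, rfl⟩ := exists_rep (J := S.J.toGrothendieck) (P := X) x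
  obtain ⟨Ty, t, rfl⟩ := exists_rep (J := S.J.toGrothendieck) (P := X) y
  refine sep X (Tx ⊓ Ty) _ _ fun I => ?_
  have hs := toPlus_apply Tx s ⟨I.Y, I.f, I.hf.1⟩
  have ht := toPlus_apply Ty t ⟨I.Y, I.f, I.hf.2⟩
  rw [← hs, ← ht]
  refine congrArg _ (hX.injective_uFn_toPlus I.Y ?_)
  beta_reduce
  rw [hs, ht, uFn_map, uFn_map]
  exact congrArg (fun u d => u (d ≫ I.f)) hxy

end IsConcrete

/-- applying Grothendieck's plus construction once to a concrete presheaf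
yields a concrete sheaf (so the sheafification of a concrete presheaf is concrete). -/
theorem statement15 (S : ConcreteSite.{u}) (X : ConcPre S) :
    IsConcSheaf S (GrothendieckTopology.plusObj (Coverage.toGrothendieck S.J) X.obj) := by
  refine ⟨?_, X.property.plusObj⟩
  rw [← isSheaf_iff_isSheaf_of_type]
  exact isSheaf_of_sep X.obj X.property.eq_of_cover
end
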